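/- Let f_i : ℝ^{n_i} → ℝ be differentiable, α-strongly convex (α > 0), with L_i-Lipschitz gradient for i = 1,…,N; let A_i ∈ ℝ^{m×n_i} be such that the stacked matrix [A_1ᵀ;…;A_Nᵀ] has full column rank; let c ∈ ℝ^m, and let P_i be symmetric positive semi-definite. Let L := max_i L_i², D := ∑_i ‖A_iᵀ‖². Suppose (x*, λ*) satisfies the KKT conditions ∇f_i(x_i*) = A_iᵀλ* and ∑_i A_i x_i* = c. Choose s > 0 with s[ρ²D‖A_i‖² + L/N] < α/(2N) for all i, and suppose 0 < γ < 2 and ρ > 0 are such that there exist ξ_i > 0 with ∑_i ξ_i < 2 − γ and ρA_iᵀA_i + P_i − 8s(ρA_iᵀA_i + P_i)ᵀ(ρA_iᵀA_i + P_i) − (ρ/ξ_i)A_iᵀA_i positive definite for each i. Let c_A ∈ (0, 1/√(2γρs)) satisfy c_A² I_m ⪯ ∑_{i=1}^N A_iA_iᵀ, let μ_s ∈ (0,1) satisfy (ρ + 4Nsρ²D)A_iᵀA_i + P_i ⪯ μ_s(ρA_iᵀA_i + P_i + 2(α − 2Ls)I_{n_i}) for all i, and set σ := max{1 − 2γρsc_A²,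 μ_s} ∈ (0,1). Define φ(x, λ) := (1/(2γρ))‖λ − λ*‖² + (1/2)∑_{i=1}^N ‖x_i − x_i*‖²_{ρA_iᵀA_i + P_i + 2(α−2Ls)I_{n_i}}. If x_i⁺ satisfies ∇f_i(x_i⁺) = A_iᵀλ − ρA_iᵀ(A_ix_i⁺ + ∑_{j≠i}A_jx_j − c) + P_i(x_i − x_i⁺) for each i and λ⁺ = λ − γρ(∑_i A_i x_i⁺ − c), then φ(x⁺, λ⁺) ≤ σ φ(x, λ). -/

import Mathlib

open Matrix Finset RealInnerProductSpace

/-- Matrix-vector multiplication `A x` as a map between Euclidean spaces. -/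
noncomputable def mv {a b : ℕ} (A : Matrix (Fin a) (Fin b) ℝ)
    (x : EuclideanSpace ℝ (Fin b)) : EuclideanSpace ℝ (Fin a) :=
  Matrix.toEuclideanLin A x

/-- Quadratic form `xᵀ M x`. -/
noncomputable def qf {a : ℕ} (M : Matrix (Fin a) (Fin a) ℝ)
    (x : EuclideanSpace ℝ (Fin a)) : ℝ := ⟪x, mv M x⟫

/-- Operator norm of a matrix, viewed as a linear map between Euclidean spaces. -/
noncomputable def opN {a b : ℕ} (A : Matrix (Fin a) (Fin b) ℝ) : ℝ :=
  ‖(LinearMap.toContinuousLinearMap (Matrix.toEuclideanLin A))‖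

/-!
Write `u = x - x*`, `v = x⁺ - x*`, `d = x - x⁺` and `r = ∑ Aᵢ vᵢ`. Subtracting the KKT conditions
from the optimality conditions of the `x`-step expresses `∇fᵢ(x⁺ᵢ) - ∇fᵢ(x*ᵢ)` through
`Aᵢᵀ(λ - λ* - ρ ∑ Aⱼ uⱼ)` and `(ρAᵢᵀAᵢ + Pᵢ) dᵢ`. Testing this against `vᵢ` and using strong
monotonicity of `∇fᵢ` gives a descent estimate for `φ`: the dual update turns `⟨r, λ - λ*⟩` into
the decrease of `‖λ - λ*‖²`, and the coupling term `ρ⟨r, ∑ Aᵢ dᵢ⟩` is absorbed by Young's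
inequality with weights `ξᵢ`, which is where `∑ ξᵢ < 2 - γ` enters. To contract the dual part,
`c_A² ‖λ - λ*‖² ≤ ∑ ‖Aᵢᵀ(λ - λ*)‖²` is bounded by the same identity, now read as a formula for
`Aᵢᵀ(λ - λ*)`, via the Lipschitz constants, `‖∑ Aⱼ uⱼ‖² ≤ N ∑ ‖Aⱼ uⱼ‖²` and the proximal terms.
The matrix condition with the `ξᵢ` pays for the `d`-terms, the one with `μ_s` for the `u`-terms.
-/

section MatrixVector

variable {a b k : ℕ}

lemma add_mv (A B : Matrix (Fin a) (Fin b) ℝ) (x : EuclideanSpace ℝ (Fin b)) :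
    mv (A + B) x = mv A x + mv B x := by simp [mv]

lemma sub_mv (A B : Matrix (Fin a) (Fin b) ℝ) (x : EuclideanSpace ℝ (Fin b)) :
    mv (A - B) x = mv A x - mv B x := by simp [mv]

lemma smul_mv (r : ℝ) (A : Matrix (Fin a) (Fin b) ℝ) (x : EuclideanSpace ℝ (Fin b)) :
    mv (r • A) x = r • mv A x := by simp [mv]

lemma one_mv (x : EuclideanSpace ℝ (Fin a)) : mv 1 x = x := by simp [mv]

lemma mul_mv (A : Matrix (Fin a) (Fin b) ℝ) (B : Matrix (Fin b) (Fin k) ℝ)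
    (x : EuclideanSpace ℝ (Fin k)) : mv (A * B) x = mv A (mv B x) := by simp [mv]

lemma mv_add (A : Matrix (Fin a) (Fin b) ℝ) (x y : EuclideanSpace ℝ (Fin b)) :
    mv A (x + y) = mv A x + mv A y := map_add _ _ _

lemma mv_sub (A : Matrix (Fin a) (Fin b) ℝ) (x y : EuclideanSpace ℝ (Fin b)) :
    mv A (x - y) = mv A x - mv A y := map_sub _ _ _

lemma mv_smul (A : Matrix (Fin a) (Fin b) ℝ) (r : ℝ) (x : EuclideanSpace ℝ (Fin b)) :
    mv A (r • x) = r • mv A x := map_smul _ _ _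

lemma inner_mv_transpose (A : Matrix (Fin a) (Fin b) ℝ) (x : EuclideanSpace ℝ (Fin b))
    (y : EuclideanSpace ℝ (Fin a)) : ⟪x, mv Aᵀ y⟫ = ⟪mv A x, y⟫ := by
  rw [mv, ← conjTranspose_eq_transpose_of_trivial, toEuclideanLin_conjTranspose_eq_adjoint,
    LinearMap.adjoint_inner_right]
  rfl

lemma norm_mv_le (A : Matrix (Fin a) (Fin b) ℝ) (x : EuclideanSpace ℝ (Fin b)) :
    ‖mv A x‖ ≤ opN A * ‖x‖ :=
  (LinearMap.toContinuousLinearMap (toEuclideanLin A)).le_opNorm x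

lemma norm_smul_mv_sq_le (r : ℝ) (A : Matrix (Fin a) (Fin b) ℝ) (x : EuclideanSpace ℝ (Fin b)) :
    ‖r • mv A x‖ ^ 2 ≤ r ^ 2 * ‖x‖ ^ 2 * opN A ^ 2 :=
  calc ‖r • mv A x‖ ^ 2 = r ^ 2 * ‖mv A x‖ ^ 2 := by
        rw [norm_smul, mul_pow, Real.norm_eq_abs, sq_abs]
    _ ≤ r ^ 2 * (opN A * ‖x‖) ^ 2 := by gcongr; exact norm_mv_le _ _
    _ = r ^ 2 * ‖x‖ ^ 2 * opN A ^ 2 := by ring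

lemma qf_add (M M' : Matrix (Fin a) (Fin a) ℝ) (x : EuclideanSpace ℝ (Fin a)) :
    qf (M + M') x = qf M x + qf M' x := by
  rw [qf, add_mv, inner_add_right, qf, qf]

lemma qf_sub (M M' : Matrix (Fin a) (Fin a) ℝ) (x : EuclideanSpace ℝ (Fin a)) :
    qf (M - M') x = qf M x - qf M' x := by
  rw [qf, sub_mv, inner_sub_right, qf, qf]

lemma qf_smul (r : ℝ) (M : Matrix (Fin a) (Fin a) ℝ) (x : EuclideanSpace ℝ (Fin a)) :
    qf (r • M) x = r * qf M x := by
  rw [qf, smul_mv, real_inner_smul_right, qf]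

lemma qf_one (x : EuclideanSpace ℝ (Fin a)) : qf 1 x = ‖x‖ ^ 2 := by
  rw [qf, one_mv, real_inner_self_eq_norm_sq]

lemma qf_sum {ι : Type*} (s : Finset ι) (M : ι → Matrix (Fin a) (Fin a) ℝ)
    (x : EuclideanSpace ℝ (Fin a)) : qf (∑ i ∈ s, M i) x = ∑ i ∈ s, qf (M i) x := by
  simp [qf, mv, inner_sum]

lemma qf_transpose_mul_self (A : Matrix (Fin a) (Fin b) ℝ) (x : EuclideanSpace ℝ (Fin b)) :
    qf (Aᵀ * A) x = ‖mv A x‖ ^ 2 := by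
  rw [qf, mul_mv, inner_mv_transpose, real_inner_self_eq_norm_sq]

lemma qf_mul_transpose_self (A : Matrix (Fin a) (Fin b) ℝ) (x : EuclideanSpace ℝ (Fin a)) :
    qf (A * Aᵀ) x = ‖mv Aᵀ x‖ ^ 2 := by
  simpa only [transpose_transpose] using qf_transpose_mul_self Aᵀ x

lemma Matrix.PosSemidef.qf_nonneg {M : Matrix (Fin a) (Fin a) ℝ} (hM : M.PosSemidef)
    (x : EuclideanSpace ℝ (Fin a)) : 0 ≤ qf M x :=
  (isPositive_toEuclideanLin_iff.2 hM).inner_nonneg_right x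

lemma two_mul_inner_mv_eq {M : Matrix (Fin a) (Fin a) ℝ} (hM : M.IsHermitian)
    (x y : EuclideanSpace ℝ (Fin a)) : 2 * ⟪x, mv M y⟫ = qf M (x + y) - qf M x - qf M y := by
  have hsymm : ⟪y, mv M x⟫ = ⟪x, mv M y⟫ :=
    isSymmetric_toEuclideanLin_iff.2 hM y x ▸ real_inner_comm _ _
  simp only [qf, mv_add, inner_add_left, inner_add_right, hsymm]
  ring

end MatrixVector

section InnerProductSpace

variable {E : Type*} [NormedAddCommGroup E] [InnerProductSpace ℝ E]

lemma two_mul_norm_sub_sq_le_inner_of_strongly_convex {f : E → ℝ} {g : E → E} {α : ℝ}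
    (hf : ∀ x y, f y ≥ f x + ⟪y - x, g x⟫ + α * ‖x - y‖ ^ 2) (x y : E) :
    2 * α * ‖x - y‖ ^ 2 ≤ ⟪x - y, g x - g y⟫ := by
  have hxy := hf x y
  have hyx := hf y x
  rw [norm_sub_rev y x] at hyx
  simp only [inner_sub_left, inner_sub_right] at *
  linarith

lemma neg_inner_le_young {ξ : ℝ} (hξ : 0 < ξ) (a b : E) :
    -⟪a, b⟫ ≤ ξ / 2 * ‖a‖ ^ 2 + 1 / (2 * ξ) * ‖b‖ ^ 2 := by
  have hsq : ξ / 2 * ‖a‖ ^ 2 + 1 / (2 * ξ) * ‖b‖ ^ 2 + ⟪a, b⟫ = ‖ξ • a + b‖ ^ 2 / (2 * ξ) := by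
    rw [norm_add_sq_real, norm_smul, real_inner_smul_left, Real.norm_of_nonneg hξ.le]
    field_simp
    ring
  have : 0 ≤ ‖ξ • a + b‖ ^ 2 / (2 * ξ) := by positivity
  linarith

lemma neg_mul_inner_sum_le_young {ι : Type*} (s : Finset ι) {ρ : ℝ} (hρ : 0 ≤ ρ) {ξ : ι → ℝ}
    (hξ : ∀ i ∈ s, 0 < ξ i) (r : E) (b : ι → E) :
    -(ρ * ⟪r, ∑ i ∈ s, b i⟫)
      ≤ (∑ i ∈ s, ξ i) * (ρ / 2 * ‖r‖ ^ 2) + ∑ i ∈ s, ρ / (2 * ξ i) * ‖b i‖ ^ 2 := by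
  rw [inner_sum, mul_sum, ← sum_neg_distrib, sum_mul, ← sum_add_distrib]
  refine sum_le_sum fun i hi => ?_
  have h := mul_le_mul_of_nonneg_left (neg_inner_le_young (hξ i hi) r (b i)) hρ
  calc -(ρ * ⟪r, b i⟫) = ρ * -⟪r, b i⟫ := by ring
    _ ≤ _ := h
    _ = _ := by field_simp

lemma norm_sq_sub_norm_sub_smul_sq {t : ℝ} (ht : t ≠ 0) (μ r : E) :
    1 / (2 * t) * (‖μ‖ ^ 2 - ‖μ - t • r‖ ^ 2) = ⟪r, μ⟫ - t / 2 * ‖r‖ ^ 2 := by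
  rw [norm_sub_sq_real, norm_smul, real_inner_smul_right, real_inner_comm, mul_pow,
    Real.norm_eq_abs, sq_abs]
  field_simp
  ring

end InnerProductSpace

section Seminormed

variable {E F : Type*} [SeminormedAddCommGroup E] [SeminormedAddCommGroup F]

lemma norm_add_sub_sq_le (a b c : E) :
    ‖a + b - c‖ ^ 2 ≤ 4 * ‖a‖ ^ 2 + 2 * ‖b‖ ^ 2 + 4 * ‖c‖ ^ 2 := by
  have h : ‖a + b - c‖ ≤ ‖a‖ + ‖b‖ + ‖c‖ :=
    (norm_sub_le _ _).trans (add_le_add_left (norm_add_le _ _) _)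
  have h2 := pow_le_pow_left₀ (norm_nonneg _) h 2
  nlinarith [sq_nonneg (‖a‖ - ‖c‖), sq_nonneg (2 * ‖a‖ - ‖b‖), sq_nonneg (2 * ‖c‖ - ‖b‖)]

lemma norm_sum_sq_le_card_mul {ι : Type*} (s : Finset ι) (f : ι → E) :
    ‖∑ i ∈ s, f i‖ ^ 2 ≤ #s * ∑ i ∈ s, ‖f i‖ ^ 2 :=
  (pow_le_pow_left₀ (norm_nonneg _) (norm_sum_le _ _) 2).trans (sq_sum_le_card_mul_sum_sq ..)

lemma norm_sub_sq_le_of_lipschitz {g : E → F} {K L : ℝ}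
    (hg : ∀ x y, ‖g x - g y‖ ≤ K * ‖x - y‖) (hK : K ^ 2 ≤ L) (x y : E) :
    ‖g x - g y‖ ^ 2 ≤ L * ‖x - y‖ ^ 2 :=
  calc ‖g x - g y‖ ^ 2 ≤ (K * ‖x - y‖) ^ 2 := pow_le_pow_left₀ (norm_nonneg _) (hg x y) 2
    _ ≤ L * ‖x - y‖ ^ 2 := by rw [mul_pow]; gcongr

end Seminormed

lemma two_mul_mul_lt_of_mul_add_div_lt {N : ℕ} (hN : 0 < N) {s a L α : ℝ} (hs : 0 < s)
    (ha : 0 ≤ a) (h : s * (a + L / N) < α / (2 * N)) : 2 * L * s < α := by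
  have hN' : (0 : ℝ) < N := by exact_mod_cast hN
  have h' : s * (L / N) < α / (2 * N) := lt_of_le_of_lt (by gcongr; linarith) h
  rw [lt_div_iff₀ (by positivity)] at h'
  calc 2 * L * s = s * (L / N) * (2 * N) := by field_simp
    _ < α := h'

lemma mul_add_mul_le_max_mul_add {a b X Y : ℝ} (hX : 0 ≤ X) (hY : 0 ≤ Y) :
    a * X + b * Y ≤ max a b * (X + Y) := by
  rw [mul_add]
  gcongr
  exacts [le_max_left a b, le_max_right a b]

section ProximalJacobiADMM

variable {N m : ℕ} {n : Fin N → ℕ}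

noncomputable def blockMv (A : (i : Fin N) → Matrix (Fin m) (Fin (n i)) ℝ)
    (z : (i : Fin N) → EuclideanSpace ℝ (Fin (n i))) : EuclideanSpace ℝ (Fin m) :=
  ∑ i, mv (A i) (z i)

variable {A : (i : Fin N) → Matrix (Fin m) (Fin (n i)) ℝ}
  {M P G : (i : Fin N) → Matrix (Fin (n i)) (Fin (n i)) ℝ}
  {g : (i : Fin N) → EuclideanSpace ℝ (Fin (n i)) → EuclideanSpace ℝ (Fin (n i))}
  {x xp xstar : (i : Fin N) → EuclideanSpace ℝ (Fin (n i))}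
  {c lam lamp lamstar : EuclideanSpace ℝ (Fin m)}

lemma blockMv_add (z z' : (i : Fin N) → EuclideanSpace ℝ (Fin (n i))) :
    blockMv A (z + z') = blockMv A z + blockMv A z' := by
  simp only [blockMv, Pi.add_apply, mv_add, sum_add_distrib]

lemma blockMv_sub (z z' : (i : Fin N) → EuclideanSpace ℝ (Fin (n i))) :
    blockMv A (z - z') = blockMv A z - blockMv A z' := by
  simp only [blockMv, Pi.sub_apply, mv_sub, sum_sub_distrib]

lemma grad_sub_grad_eq_of_step {ρ : ℝ}
    (hopt : ∀ i, g i (xp i) = mv (A i)ᵀ lam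
        - ρ • mv (A i)ᵀ (mv (A i) (xp i) + (∑ j ∈ univ.erase i, mv (A j) (x j)) - c)
        + mv (P i) (x i - xp i))
    (hkkt1 : ∀ i, g i (xstar i) = mv (A i)ᵀ lamstar) (hkkt2 : blockMv A xstar = c) (i : Fin N) :
    g i (xp i) - g i (xstar i) = mv (A i)ᵀ (lam - lamstar - ρ • blockMv A (x - xstar))
      + mv (ρ • ((A i)ᵀ * A i) + P i) (x i - xp i) := by
  have hres : mv (A i) (xp i) + (∑ j ∈ univ.erase i, mv (A j) (x j)) - c
      = blockMv A (x - xstar) - mv (A i) (x i - xp i) := by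
    rw [blockMv_sub, hkkt2, blockMv, ← add_sum_erase _ _ (mem_univ i), mv_sub]
    abel
  rw [hopt i, hkkt1 i, hres]
  simp only [mv_sub, mv_smul, add_mv, smul_mv, mul_mv]
  module

lemma descent_estimate {α ρ γ : ℝ} {ξ : Fin N → ℝ} (hM : ∀ i, (M i).IsHermitian)
    (hρ : 0 < ρ) (hγ : 0 < γ) (hξ : ∀ i, 0 < ξ i) (hξsum : ∑ i, ξ i ≤ 2 - γ)
    (hmono : ∀ i, 2 * α * ‖xp i - xstar i‖ ^ 2 ≤ ⟪xp i - xstar i, g i (xp i) - g i (xstar i)⟫)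
    (hgrad : ∀ i, g i (xp i) - g i (xstar i)
      = mv (A i)ᵀ (lam - lamstar - ρ • blockMv A (x - xstar)) + mv (M i) (x i - xp i))
    (hkkt2 : blockMv A xstar = c) (hdual : lamp = lam - (γ * ρ) • (blockMv A xp - c)) :
    1 / (2 * γ * ρ) * ‖lamp - lamstar‖ ^ 2 + 1 / 2 * ∑ i, qf (M i) (xp i - xstar i)
        + 2 * α * ∑ i, ‖xp i - xstar i‖ ^ 2
        + (1 / 2 * ∑ i, qf (M i) (x i - xp i)
          - ∑ i, ρ / (2 * ξ i) * ‖mv (A i) (x i - xp i)‖ ^ 2)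
      ≤ 1 / (2 * γ * ρ) * ‖lam - lamstar‖ ^ 2 + 1 / 2 * ∑ i, qf (M i) (x i - xstar i) := by
  rw [← hkkt2, ← blockMv_sub] at hdual
  set r := blockMv A (xp - xstar)
  set w := blockMv A (x - xp)
  have hsplit : blockMv A (x - xstar) = r + w := by
    rw [← blockMv_add, sub_add_sub_cancel']
  have hpolar : ∑ i, ⟪xp i - xstar i, mv (M i) (x i - xp i)⟫ = 1 / 2 *
      (∑ i, qf (M i) (x i - xstar i) - ∑ i, qf (M i) (xp i - xstar i)
        - ∑ i, qf (M i) (x i - xp i)) := by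
    rw [← sum_sub_distrib, ← sum_sub_distrib, mul_sum]
    refine sum_congr rfl fun i _ => ?_
    have h := two_mul_inner_mv_eq (hM i) (xp i - xstar i) (x i - xp i)
    rw [sub_add_sub_cancel'] at h
    linarith
  have hinner : ∑ i, ⟪xp i - xstar i, g i (xp i) - g i (xstar i)⟫
      = ⟪r, lam - lamstar⟫ - ρ * ‖r‖ ^ 2 - ρ * ⟪r, w⟫
        + ∑ i, ⟪xp i - xstar i, mv (M i) (x i - xp i)⟫ := by
    have hr : ∀ μ, ⟪r, μ⟫ = ∑ i, ⟪xp i - xstar i, mv (A i)ᵀ μ⟫ := fun μ => by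
      simp only [inner_mv_transpose]
      exact sum_inner _ _ _
    simp only [hgrad, inner_add_right, sum_add_distrib, ← hr, hsplit, inner_sub_right,
      real_inner_smul_right, real_inner_self_eq_norm_sq]
    ring
  have hdual_gain : 1 / (2 * γ * ρ) * (‖lam - lamstar‖ ^ 2 - ‖lamp - lamstar‖ ^ 2)
      = ⟪r, lam - lamstar⟫ - γ * ρ / 2 * ‖r‖ ^ 2 := by
    rw [hdual, sub_right_comm, mul_assoc 2 γ ρ]
    exact norm_sq_sub_norm_sub_smul_sq (by positivity) _ _
  have hyoung : -(ρ * ⟪r, w⟫) ≤ (∑ i, ξ i) * (ρ / 2 * ‖r‖ ^ 2)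
      + ∑ i, ρ / (2 * ξ i) * ‖mv (A i) (x i - xp i)‖ ^ 2 :=
    neg_mul_inner_sum_le_young univ hρ.le (fun i _ => hξ i) r _
  have hslack : 0 ≤ (2 - γ - ∑ i, ξ i) * (ρ / 2 * ‖r‖ ^ 2) :=
    mul_nonneg (by linarith) (by positivity)
  have hmono_sum := sum_le_sum fun i (_ : i ∈ univ) => hmono i
  rw [← mul_sum] at hmono_sum
  linarith

lemma sq_mul_norm_sq_le_sum_norm_mv_transpose_sq {κ : ℝ}
    (hc : ((∑ i, A i * (A i)ᵀ) - κ ^ 2 • (1 : Matrix (Fin m) (Fin m) ℝ)).PosSemidef)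
    (μ : EuclideanSpace ℝ (Fin m)) : κ ^ 2 * ‖μ‖ ^ 2 ≤ ∑ i, ‖mv (A i)ᵀ μ‖ ^ 2 := by
  have h := hc.qf_nonneg μ
  simp only [qf_sub, qf_sum, qf_smul, qf_one, qf_mul_transpose_self] at h
  linarith

lemma dual_error_bound {ρ cA L : ℝ}
    (hcA : ((∑ i, A i * (A i)ᵀ) - cA ^ 2 • (1 : Matrix (Fin m) (Fin m) ℝ)).PosSemidef)
    (hLg : ∀ i, ‖g i (xp i) - g i (xstar i)‖ ^ 2 ≤ L * ‖xp i - xstar i‖ ^ 2)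
    (hgrad : ∀ i, g i (xp i) - g i (xstar i)
      = mv (A i)ᵀ (lam - lamstar - ρ • blockMv A (x - xstar)) + mv (M i) (x i - xp i)) :
    cA ^ 2 * ‖lam - lamstar‖ ^ 2 ≤ 4 * L * ∑ i, ‖xp i - xstar i‖ ^ 2
      + 2 * N * ρ ^ 2 * (∑ i, opN (A i)ᵀ ^ 2) * ∑ i, ‖mv (A i) (x i - xstar i)‖ ^ 2
      + 4 * ∑ i, ‖mv (M i) (x i - xp i)‖ ^ 2 := by
  set rr := blockMv A (x - xstar)
  have hper : ∀ i, ‖mv (A i)ᵀ (lam - lamstar)‖ ^ 2 ≤ 4 * (L * ‖xp i - xstar i‖ ^ 2)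
      + 2 * ρ ^ 2 * ‖rr‖ ^ 2 * opN (A i)ᵀ ^ 2 + 4 * ‖mv (M i) (x i - xp i)‖ ^ 2 := by
    intro i
    have hsplit : mv (A i)ᵀ (lam - lamstar)
        = (g i (xp i) - g i (xstar i)) + ρ • mv (A i)ᵀ rr - mv (M i) (x i - xp i) := by
      rw [hgrad i]
      simp only [mv_sub, mv_smul]
      abel
    rw [hsplit]
    linarith [norm_add_sub_sq_le (g i (xp i) - g i (xstar i)) (ρ • mv (A i)ᵀ rr)
      (mv (M i) (x i - xp i)), hLg i, norm_smul_mv_sq_le ρ (A i)ᵀ rr]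
  have hrr : ‖rr‖ ^ 2 ≤ N * ∑ i, ‖mv (A i) (x i - xstar i)‖ ^ 2 := by
    have h := norm_sum_sq_le_card_mul univ fun i => mv (A i) ((x - xstar) i)
    rwa [card_univ, Fintype.card_fin] at h
  calc cA ^ 2 * ‖lam - lamstar‖ ^ 2 ≤ ∑ i, ‖mv (A i)ᵀ (lam - lamstar)‖ ^ 2 :=
        sq_mul_norm_sq_le_sum_norm_mv_transpose_sq hcA _
    _ ≤ ∑ i, (4 * (L * ‖xp i - xstar i‖ ^ 2) + 2 * ρ ^ 2 * ‖rr‖ ^ 2 * opN (A i)ᵀ ^ 2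
          + 4 * ‖mv (M i) (x i - xp i)‖ ^ 2) := sum_le_sum fun i _ => hper i
    _ = 4 * L * ∑ i, ‖xp i - xstar i‖ ^ 2 + 2 * ρ ^ 2 * (∑ i, opN (A i)ᵀ ^ 2) * ‖rr‖ ^ 2
          + 4 * ∑ i, ‖mv (M i) (x i - xp i)‖ ^ 2 := by
      simp only [sum_add_distrib, ← mul_sum]
      ring
    _ ≤ _ := by
      have hD : 0 ≤ 2 * ρ ^ 2 * ∑ i, opN (A i)ᵀ ^ 2 :=
        mul_nonneg (by positivity) (sum_nonneg fun i _ => sq_nonneg _)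
      linarith [mul_le_mul_of_nonneg_left hrr hD]

lemma sum_norm_mv_sq_le_of_posSemidef {s ρ : ℝ} {ξ : Fin N → ℝ}
    (h : ∀ i, (M i - (8 * s) • ((M i)ᵀ * M i) - (ρ / ξ i) • ((A i)ᵀ * A i)).PosSemidef)
    (d : (i : Fin N) → EuclideanSpace ℝ (Fin (n i))) :
    4 * s * ∑ i, ‖mv (M i) (d i)‖ ^ 2
      ≤ 1 / 2 * ∑ i, qf (M i) (d i) - ∑ i, ρ / (2 * ξ i) * ‖mv (A i) (d i)‖ ^ 2 := by
  rw [mul_sum, mul_sum, ← sum_sub_distrib]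
  refine sum_le_sum fun i _ => ?_
  have h := (h i).qf_nonneg (d i)
  simp only [qf_sub, qf_smul, qf_transpose_mul_self] at h
  rw [show ρ / (2 * ξ i) = ρ / ξ i / 2 by ring]
  linarith

lemma sum_qf_add_mul_sum_le_of_posSemidef {ρ t μ : ℝ}
    (h : ∀ i, (μ • G i - ((ρ + t) • ((A i)ᵀ * A i) + P i)).PosSemidef)
    (z : (i : Fin N) → EuclideanSpace ℝ (Fin (n i))) :
    ∑ i, qf (ρ • ((A i)ᵀ * A i) + P i) (z i) + t * ∑ i, ‖mv (A i) (z i)‖ ^ 2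
      ≤ μ * ∑ i, qf (G i) (z i) := by
  rw [mul_sum, mul_sum, ← sum_add_distrib]
  refine sum_le_sum fun i _ => ?_
  have h := (h i).qf_nonneg (z i)
  simp only [qf_sub, qf_add, qf_smul, qf_transpose_mul_self] at h ⊢
  linarith

lemma sum_qf_add_smul_one (c : ℝ) (z : (i : Fin N) → EuclideanSpace ℝ (Fin (n i))) :
    ∑ i, qf (M i + c • (1 : Matrix (Fin (n i)) (Fin (n i)) ℝ)) (z i)
      = ∑ i, qf (M i) (z i) + c * ∑ i, ‖z i‖ ^ 2 := by
  simp only [qf_add, qf_smul, qf_one, sum_add_distrib, mul_sum]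

end ProximalJacobiADMM

theorem stmt12_general {N m : ℕ} (hN : 0 < N) (n : Fin N → ℕ)
    (f : (i : Fin N) → EuclideanSpace ℝ (Fin (n i)) → ℝ)
    (g : (i : Fin N) → EuclideanSpace ℝ (Fin (n i)) → EuclideanSpace ℝ (Fin (n i)))
    (α : ℝ)
    (hsc : ∀ i x y, f i y ≥ f i x + ⟪y - x, g i x⟫ + α * ‖x - y‖ ^ 2)
    (Li : Fin N → ℝ)
    (hlip : ∀ i x y, ‖g i x - g i y‖ ≤ Li i * ‖x - y‖)
    (A : (i : Fin N) → Matrix (Fin m) (Fin (n i)) ℝ)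
    (c : EuclideanSpace ℝ (Fin m))
    (P : (i : Fin N) → Matrix (Fin (n i)) (Fin (n i)) ℝ)
    (hP : ∀ i, (P i).PosSemidef)
    (L D : ℝ)
    (hL : L = Finset.univ.sup' ⟨⟨0, hN⟩, Finset.mem_univ _⟩ (fun i => (Li i) ^ 2))
    (hD : D = ∑ i, opN (A i)ᵀ ^ 2)
    (xstar : (i : Fin N) → EuclideanSpace ℝ (Fin (n i)))
    (lamstar : EuclideanSpace ℝ (Fin m))
    (hkkt1 : ∀ i, g i (xstar i) = mv (A i)ᵀ lamstar)
    (hkkt2 : ∑ i, mv (A i) (xstar i) = c)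
    (ρ γ s : ℝ) (hρ : 0 < ρ) (hγ0 : 0 < γ) (hs : 0 < s)
    (hscond : ∀ i, s * (ρ ^ 2 * D * opN (A i) ^ 2 + L / N) < α / (2 * N))
    (ξ : Fin N → ℝ) (hξ : ∀ i, 0 < ξ i) (hξsum : ∑ i, ξ i < 2 - γ)
    (hmat : ∀ i, (ρ • ((A i)ᵀ * A i) + P i
        - (8 * s) • ((ρ • ((A i)ᵀ * A i) + P i)ᵀ * (ρ • ((A i)ᵀ * A i) + P i))
        - (ρ / ξ i) • ((A i)ᵀ * A i)).PosDef)
    (cA : ℝ)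
    (hcAmat : ((∑ i, A i * (A i)ᵀ) - cA ^ 2 • (1 : Matrix (Fin m) (Fin m) ℝ)).PosSemidef)
    (μs : ℝ)
    (hμsmat : ∀ i, (μs • (ρ • ((A i)ᵀ * A i) + P i
          + (2 * (α - 2 * L * s)) • (1 : Matrix (Fin (n i)) (Fin (n i)) ℝ))
        - ((ρ + 4 * N * s * ρ ^ 2 * D) • ((A i)ᵀ * A i) + P i)).PosSemidef)
    (x xp : (i : Fin N) → EuclideanSpace ℝ (Fin (n i)))
    (lam lamp : EuclideanSpace ℝ (Fin m))
    (hopt : ∀ i, g i (xp i) = mv (A i)ᵀ lam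
        - ρ • mv (A i)ᵀ (mv (A i) (xp i) + (∑ j ∈ Finset.univ.erase i, mv (A j) (x j)) - c)
        + mv (P i) (x i - xp i))
    (hdual : lamp = lam - (γ * ρ) • ((∑ i, mv (A i) (xp i)) - c)) :
    (1 / (2 * γ * ρ)) * ‖lamp - lamstar‖ ^ 2
        + (1 / 2) * ∑ i, qf (ρ • ((A i)ᵀ * A i) + P i
            + (2 * (α - 2 * L * s)) • (1 : Matrix (Fin (n i)) (Fin (n i)) ℝ)) (xp i - xstar i)
      ≤ max (1 - 2 * γ * ρ * s * cA ^ 2) μs *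
        ((1 / (2 * γ * ρ)) * ‖lam - lamstar‖ ^ 2
          + (1 / 2) * ∑ i, qf (ρ • ((A i)ᵀ * A i) + P i
              + (2 * (α - 2 * L * s)) • (1 : Matrix (Fin (n i)) (Fin (n i)) ℝ)) (x i - xstar i)) := by
  have hLi : ∀ i, Li i ^ 2 ≤ L := fun i => hL ▸ le_sup' (fun i => Li i ^ 2) (mem_univ i)
  have hD0 : 0 ≤ D := hD ▸ sum_nonneg fun i _ => sq_nonneg _
  have hsL : 2 * L * s < α :=
    two_mul_mul_lt_of_mul_add_div_lt hN hs (by positivity) (hscond ⟨0, hN⟩)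
  have hM : ∀ i, (ρ • ((A i)ᵀ * A i) + P i).PosSemidef := fun i => by
    simpa using ((posSemidef_conjTranspose_mul_self (A i)).smul hρ.le).add (hP i)
  have hgrad := grad_sub_grad_eq_of_step hopt hkkt1 hkkt2
  have hdescent := descent_estimate (fun i => (hM i).isHermitian) hρ hγ0 hξ hξsum.le
    (fun i => two_mul_norm_sub_sq_le_inner_of_strongly_convex (hsc i) _ _) hgrad hkkt2 hdual
  have hdual_err := dual_error_bound hcAmat
    (fun i => norm_sub_sq_le_of_lipschitz (hlip i) (hLi i) _ _) hgrad
  rw [← hD] at hdual_err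
  have hprox := sum_norm_mv_sq_le_of_posSemidef (fun i => (hmat i).posSemidef) (fun i => x i - xp i)
  have hweight := sum_qf_add_mul_sum_le_of_posSemidef hμsmat (fun i => x i - xstar i)
  have hG : ∀ i, (ρ • ((A i)ᵀ * A i) + P i
      + (2 * (α - 2 * L * s)) • (1 : Matrix (Fin (n i)) (Fin (n i)) ℝ)).PosSemidef :=
    fun i => (hM i).add (PosSemidef.one.smul (by linarith))
  refine le_trans ?_ (mul_add_mul_le_max_mul_add (by positivity)
    (mul_nonneg (by norm_num) (sum_nonneg fun i _ => (hG i).qf_nonneg _)))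
  simp only [sum_qf_add_smul_one] at hweight ⊢
  have hSv : 0 ≤ ∑ i, ‖xp i - xstar i‖ ^ 2 := sum_nonneg fun i _ => sq_nonneg _
  have hσ : (1 - 2 * γ * ρ * s * cA ^ 2) * (1 / (2 * γ * ρ) * ‖lam - lamstar‖ ^ 2)
      = 1 / (2 * γ * ρ) * ‖lam - lamstar‖ ^ 2 - s * (cA ^ 2 * ‖lam - lamstar‖ ^ 2) := by
    field_simp
  linarith [mul_le_mul_of_nonneg_left hdual_err hs.le, mul_le_mul_of_nonneg_right hsL.le hSv]

/-- the one-step contraction of Theorem 2.1: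
`φ(x⁺, λ⁺) ≤ σ φ(x, λ)` with `σ = max {1 - 2γρs c_A², μ_s}`. -/
theorem stmt12 {N m : ℕ} (hN : 0 < N) (n : Fin N → ℕ)
    (f : (i : Fin N) → EuclideanSpace ℝ (Fin (n i)) → ℝ)
    (g : (i : Fin N) → EuclideanSpace ℝ (Fin (n i)) → EuclideanSpace ℝ (Fin (n i)))
    (hdiff : ∀ i x, HasGradientAt (f i) (g i x) x)
    (α : ℝ) (hα : 0 < α)
    (hsc : ∀ i x y, f i y ≥ f i x + ⟪y - x, g i x⟫ + α * ‖x - y‖ ^ 2)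
    (Li : Fin N → ℝ)
    (hlip : ∀ i x y, ‖g i x - g i y‖ ≤ Li i * ‖x - y‖)
    (A : (i : Fin N) → Matrix (Fin m) (Fin (n i)) ℝ)
    (hrank : ∀ μ : EuclideanSpace ℝ (Fin m), (∀ i, mv (A i)ᵀ μ = 0) → μ = 0)
    (c : EuclideanSpace ℝ (Fin m))
    (P : (i : Fin N) → Matrix (Fin (n i)) (Fin (n i)) ℝ)
    (hP : ∀ i, (P i).PosSemidef)
    (L D : ℝ)
    (hL : L = Finset.univ.sup' ⟨⟨0, hN⟩, Finset.mem_univ _⟩ (fun i => (Li i) ^ 2))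
    (hD : D = ∑ i, opN (A i)ᵀ ^ 2)
    (xstar : (i : Fin N) → EuclideanSpace ℝ (Fin (n i)))
    (lamstar : EuclideanSpace ℝ (Fin m))
    (hkkt1 : ∀ i, g i (xstar i) = mv (A i)ᵀ lamstar)
    (hkkt2 : ∑ i, mv (A i) (xstar i) = c)
    (ρ γ s : ℝ) (hρ : 0 < ρ) (hγ0 : 0 < γ) (hγ2 : γ < 2) (hs : 0 < s)
    (hscond : ∀ i, s * (ρ ^ 2 * D * opN (A i) ^ 2 + L / N) < α / (2 * N))
    (ξ : Fin N → ℝ) (hξ : ∀ i, 0 < ξ i) (hξsum : ∑ i, ξ i < 2 - γ)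
    (hmat : ∀ i, (ρ • ((A i)ᵀ * A i) + P i
        - (8 * s) • ((ρ • ((A i)ᵀ * A i) + P i)ᵀ * (ρ • ((A i)ᵀ * A i) + P i))
        - (ρ / ξ i) • ((A i)ᵀ * A i)).PosDef)
    (cA : ℝ) (hcA0 : 0 < cA) (hcA1 : cA < 1 / Real.sqrt (2 * γ * ρ * s))
    (hcAmat : ((∑ i, A i * (A i)ᵀ) - cA ^ 2 • (1 : Matrix (Fin m) (Fin m) ℝ)).PosSemidef)
    (μs : ℝ) (hμs0 : 0 < μs) (hμs1 : μs < 1)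
    (hμsmat : ∀ i, (μs • (ρ • ((A i)ᵀ * A i) + P i
          + (2 * (α - 2 * L * s)) • (1 : Matrix (Fin (n i)) (Fin (n i)) ℝ))
        - ((ρ + 4 * N * s * ρ ^ 2 * D) • ((A i)ᵀ * A i) + P i)).PosSemidef)
    (x xp : (i : Fin N) → EuclideanSpace ℝ (Fin (n i)))
    (lam lamp : EuclideanSpace ℝ (Fin m))
    (hopt : ∀ i, g i (xp i) = mv (A i)ᵀ lam
        - ρ • mv (A i)ᵀ (mv (A i) (xp i) + (∑ j ∈ Finset.univ.erase i, mv (A j) (x j)) - c)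
        + mv (P i) (x i - xp i))
    (hdual : lamp = lam - (γ * ρ) • ((∑ i, mv (A i) (xp i)) - c)) :
    (1 / (2 * γ * ρ)) * ‖lamp - lamstar‖ ^ 2
        + (1 / 2) * ∑ i, qf (ρ • ((A i)ᵀ * A i) + P i
            + (2 * (α - 2 * L * s)) • (1 : Matrix (Fin (n i)) (Fin (n i)) ℝ)) (xp i - xstar i)
      ≤ max (1 - 2 * γ * ρ * s * cA ^ 2) μs *
        ((1 / (2 * γ * ρ)) * ‖lam - lamstar‖ ^ 2
          + (1 / 2) * ∑ i, qf (ρ • ((A i)ᵀ * A i) + P i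
              + (2 * (α - 2 * L * s)) • (1 : Matrix (Fin (n i)) (Fin (n i)) ℝ)) (x i - xstar i)) :=
  stmt12_general hN n f g α hsc Li hlip A c P hP L D hL hD xstar lamstar hkkt1 hkkt2 ρ γ s hρ hγ0 hs
    hscond ξ hξ hξsum hmat cA hcAmat μs hμsmat x xp lam lamp hopt hdual
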